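/- The number of bargraphs of semiperimeter n with no two consecutive U steps and having exactly j H steps equals the number of secondary structures on n−1 vertices with j−1 vertices of degree at most 2 from non-consecutive edges; in particular, for every n ≥ 2, the number of bargraphs of semiperimeter n with no two consecutive U steps equals the number of secondary structures on n−1 vertices. -/

import Mathlib

/-- Steps of bargraphs / Motzkin paths. -/
inductive Step where
  | U : Step
  | H : Step
  | D : Step
deriving DecidableEq

/-- Vertical displacement of a step. -/
def Step.val : Step → ℤ
  | .U => 1
  | .H => 0
  | .D => -1

/-- Mirror of a step (swap U and D). -/
def Step.mirror : Step → Step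
  | .U => .D
  | .H => .H
  | .D => .U

/-- Final height of a word. -/
def hgt (w : List Step) : ℤ := (w.map Step.val).sum

/-- A Motzkin path prefix: never goes below the x-axis. -/
def IsMotzkinPrefix (w : List Step) : Prop := ∀ p : List Step, p <+: w → 0 ≤ hgt p

/-- A Motzkin path: never below the x-axis, ends at height 0. -/
def IsMotzkin (w : List Step) : Prop := IsMotzkinPrefix w ∧ hgt w = 0

/-- No peak `UD` and no valley `DU`. -/
def Cornerless (w : List Step) : Prop :=
  ¬ [Step.U, Step.D] <:+: w ∧ ¬ [Step.D, Step.U] <:+: w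

/-- A bargraph: starts at the origin, ends on the x-axis, stays strictly above the
x-axis except at the endpoints, and has no factor `UD` or `DU`. -/
def IsBargraph (w : List Step) : Prop :=
  2 ≤ w.length ∧ hgt w = 0 ∧
    (∀ p : List Step, p <+: w → p ≠ [] → p ≠ w → 0 < hgt p) ∧ Cornerless w

/-- Semiperimeter: number of `U` steps plus number of `H` steps. -/
def semi (w : List Step) : ℕ := w.count Step.U + w.count Step.H

/-- Length of the initial run of `U` steps. -/
def leadU : List Step → ℕ
  | Step.U :: rest => leadU rest + 1
  | _ => 0

/-- Length of the initial run of `H` steps. -/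
def leadH : List Step → ℕ
  | Step.H :: rest => leadH rest + 1
  | _ => 0

/-- Length of the initial run of `D` steps. -/
def leadD : List Step → ℕ
  | Step.D :: rest => leadD rest + 1
  | _ => 0

/-- Length of the first maximal run of `D` steps (0 if none). -/
def firstDescLen : List Step → ℕ
  | [] => 0
  | Step.D :: rest => leadD rest + 1
  | _ :: rest => firstDescLen rest

/-- Number of occurrences of the two-letter factor `a b`. -/
def cnt2 (a b : Step) : List Step → ℕ
  | x :: y :: rest => (if x = a ∧ y = b then 1 else 0) + cnt2 a b (y :: rest)
  | _ => 0

/-- Heights of the columns (`H` steps), starting from a given height. -/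
def colHeights : ℤ → List Step → List ℤ
  | _, [] => []
  | h, Step.U :: rest => colHeights (h + 1) rest
  | h, Step.H :: rest => h :: colHeights h rest
  | h, Step.D :: rest => colHeights (h - 1) rest

/-- Width of the leftmost maximal horizontal segment (0 if none). -/
def lhsW : List Step → ℕ
  | [] => 0
  | Step.H :: rest => leadH rest + 1
  | _ :: rest => lhsW rest

/-- Delete `h` steps at the start of the leftmost horizontal segment. -/
def stripLeadH (h : ℕ) : List Step → List Step
  | [] => []
  | Step.H :: rest => List.drop h (Step.H :: rest)
  | s :: rest => s :: stripLeadH h rest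

/-- Number of initial columns of height 1: largest `j` such that the word begins `U H^j`. -/
def iuc : List Step → ℕ
  | Step.U :: rest => leadH rest
  | _ => 0

/-- Number of maximal horizontal segments. -/
def hsCount : List Step → ℕ
  | [] => 0
  | [Step.H] => 1
  | [_] => 0
  | a :: b :: rest => (if a = Step.H ∧ b ≠ Step.H then 1 else 0) + hsCount (b :: rest)

/-- Mirror image: reverse the word and swap `U` with `D`. -/
def mir (w : List Step) : List Step := (w.reverse).map Step.mirror

/-- Shape of strictly alternating bargraphs:
`U^{i₁} H D^{k₁} H U^{i₂} H D^{k₂} H ⋯ U^{iₘ} H D^{kₘ}` with all `iᵣ, kᵣ ≥ 1`. -/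
inductive SAShape : List Step → Prop where
  | base (i k : ℕ) : 1 ≤ i → 1 ≤ k →
      SAShape (List.replicate i Step.U ++ [Step.H] ++ List.replicate k Step.D)
  | cons (i k : ℕ) (w : List Step) : 1 ≤ i → 1 ≤ k → SAShape w →
      SAShape (List.replicate i Step.U ++ [Step.H] ++ List.replicate k Step.D ++ [Step.H] ++ w)

/-- A strictly alternating bargraph. -/
def IsStrictAlt (w : List Step) : Prop := IsBargraph w ∧ SAShape w

/-- A secondary structure on `{0, …, m-1}`: all consecutive edges are present, every
vertex has at most one non-consecutive neighbour, and there are no crossing edges. -/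
def IsSecondaryStructure {m : ℕ} (G : SimpleGraph (Fin m)) : Prop :=
  (∀ i j : Fin m, (i : ℕ) + 1 = (j : ℕ) → G.Adj i j) ∧
  (∀ i j k : Fin m, G.Adj i j → G.Adj i k →
      (i : ℕ) + 1 ≠ (j : ℕ) → (j : ℕ) + 1 ≠ (i : ℕ) →
      (i : ℕ) + 1 ≠ (k : ℕ) → (k : ℕ) + 1 ≠ (i : ℕ) → j = k) ∧
  ¬ ∃ i j k l : Fin m, (i : ℕ) < (j : ℕ) ∧ (j : ℕ) < (k : ℕ) ∧ (k : ℕ) < (l : ℕ) ∧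
      G.Adj i k ∧ G.Adj j l

/-- Generating function of bargraphs: `x` (variable 0) marks `H` steps,
`y` (variable 1) marks `U` steps. -/
noncomputable def BG : MvPowerSeries (Fin 2) ℚ :=
  fun d => (Nat.card {w : List Step //
    IsBargraph w ∧ w.count Step.H = d 0 ∧ w.count Step.U = d 1} : ℚ)

/-- Generating function of cornerless Motzkin paths. -/
noncomputable def MG : MvPowerSeries (Fin 2) ℚ :=
  fun d => (Nat.card {w : List Step //
    IsMotzkin w ∧ Cornerless w ∧ w.count Step.H = d 0 ∧ w.count Step.U = d 1} : ℚ)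

/-- Generating function of bargraphs avoiding the factor `DH`. -/
noncomputable def BDH : MvPowerSeries (Fin 2) ℚ :=
  fun d => (Nat.card {w : List Step //
    IsBargraph w ∧ ¬ [Step.D, Step.H] <:+: w ∧
      w.count Step.H = d 0 ∧ w.count Step.U = d 1} : ℚ)

/-- Generating function of bargraphs avoiding the factors `DH` and `HH`. -/
noncomputable def BDHHH : MvPowerSeries (Fin 2) ℚ :=
  fun d => (Nat.card {w : List Step //
    IsBargraph w ∧ ¬ [Step.D, Step.H] <:+: w ∧ ¬ [Step.H, Step.H] <:+: w ∧
      w.count Step.H = d 0 ∧ w.count Step.U = d 1} : ℚ)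

/-- Generating function of cornerless Motzkin path prefixes ending at height `h`. -/
noncomputable def Pgf (h : ℕ) : MvPowerSeries (Fin 2) ℚ :=
  fun d => (Nat.card {w : List Step //
    IsMotzkinPrefix w ∧ Cornerless w ∧ hgt w = (h : ℤ) ∧
      w.count Step.H = d 0 ∧ w.count Step.U = d 1} : ℚ)

/-- Decomposition `G = U^a G₁ H G₂ D^a` of a strictly alternating bargraph. -/
def SADecomp (t : ℕ × List Step × List Step) (G : List Step) : Prop :=
  1 ≤ t.1 ∧ IsStrictAlt t.2.1 ∧ IsStrictAlt (Step.U :: (t.2.2 ++ [Step.D])) ∧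
    G = List.replicate t.1 Step.U ++ t.2.1 ++ [Step.H] ++ t.2.2 ++
      List.replicate t.1 Step.D

/-!
Both families are put in bijection with the peakless Motzkin paths (no factor `UD`) of length
`n - 1`.

Replacing every `U` of such a path `M` by `HU` and framing the result as `U ⋯ D` gives a bargraph
without `UU`; conversely, in such a bargraph every inner `U` is preceded by an `H`, so the frame can
be removed and the `HU`s contracted. The semiperimeter is `|M| + 1`, and the `H` steps correspond to
the steps of `M` other than `U`.

A peakless Motzkin path of length `m` gives the secondary structure on `m` vertices whose long arcs
join each `U` to the `D` at which the path first comes back to its level. Conversely, read a vertex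
of a secondary structure as `U`, `D` or `H` according as it has a long arc to the right, to the
left, or none. Since every vertex carries at most one long arc, the height of this word before
vertex `k` is the number of long arcs passing over that gap; so the word is a Motzkin path, and as
the arcs do not cross, the arc leaving a vertex `a` ends where the path first returns to the level
of `a`. The vertices without a long arc to the right are the letters other than `U`, and the last
vertex is always one of them, whence the shift from `j` to `j - 1`.
-/

namespace List

theorem pair_infix_iff_getElem? {α : Type*} {a b : α} {l : List α} :
    [a, b] <:+: l ↔ ∃ k, l[k]? = some a ∧ l[k + 1]? = some b := by
  rw [infix_iff_getElem?]
  constructor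
  · rintro ⟨k, -, h⟩
    exact ⟨k, by simpa using h 0 (by simp), by simpa [add_comm] using h 1 (by simp)⟩
  · rintro ⟨k, ha, hb⟩
    refine ⟨k, ?_, fun i hi => ?_⟩
    · have := (getElem?_eq_some_iff.1 hb).1
      simp only [length_cons, length_nil]
      omega
    · match i, hi with
      | 0, _ => simpa using ha
      | 1, _ => simpa [add_comm] using hb

theorem not_pair_infix_iff_isChain {α : Type*} {a b : α} {l : List α} :
    ¬ [a, b] <:+: l ↔ l.IsChain fun x y => ¬ (x = a ∧ y = b) := by
  rw [isChain_iff_forall_rel_of_append_cons_cons]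
  constructor
  · rintro h x y s t rfl ⟨rfl, rfl⟩
    exact h ⟨s, t, by simp⟩
  · rintro h ⟨s, t, rfl⟩
    exact h (l₁ := s) (l₂ := t) (by simp) ⟨rfl, rfl⟩

theorem isChain_and_iff {α : Type*} {R S : α → α → Prop} {l : List α} :
    l.IsChain (fun x y => R x y ∧ S x y) ↔ l.IsChain R ∧ l.IsChain S := by
  simp only [isChain_iff_getElem, ← forall_and]

end List

theorem Finset.card_filter_eq_ite {α : Type*} {s : Finset α} {p : α → Prop} [DecidablePred p]
    (h : ∀ x ∈ s, ∀ y ∈ s, p x → p y → x = y) :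
    (s.filter p).card = if ∃ x ∈ s, p x then 1 else 0 := by
  split_ifs with hs
  · obtain ⟨x, hx, hpx⟩ := hs
    refine Finset.card_eq_one.2 ⟨x, Finset.ext fun y => ?_⟩
    simp only [Finset.mem_filter, Finset.mem_singleton]
    exact ⟨fun ⟨hy, hpy⟩ => h y hy x hx hpy hpx, fun hy => hy ▸ ⟨hx, hpx⟩⟩
  · exact Finset.card_eq_zero.2 (Finset.filter_eq_empty_iff.2 fun x hx hpx => hs ⟨x, hx, hpx⟩)

theorem Nat.card_subtype_and_eq_of_equiv {α β γ : Type*} {p : α → Prop} {q : β → Prop}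
    (e : {a // p a} ≃ {b // q b}) {f : α → γ} {g : β → γ} (hfg : ∀ a, g (e a) = f a) (c : γ) :
    Nat.card {a // p a ∧ f a = c} = Nat.card {b // q b ∧ g b = c} :=
  Nat.card_congr <| (Equiv.subtypeSubtypeEquivSubtypeInter p (f · = c)).symm.trans <|
    (e.subtypeEquiv fun a => by rw [hfg]).trans (Equiv.subtypeSubtypeEquivSubtypeInter q (g · = c))

@[simp] lemma hgt_nil : hgt [] = 0 := rfl

@[simp] lemma hgt_cons (s : Step) (w : List Step) : hgt (s :: w) = s.val + hgt w := by
  simp [hgt]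

@[simp] lemma hgt_append (v w : List Step) : hgt (v ++ w) = hgt v + hgt w := by
  simp [hgt]

lemma Step.eq_U_of_val_pos {s : Step} (h : 0 < s.val) : s = Step.U := by
  cases s <;> simp_all [Step.val]

lemma Step.eq_D_of_val_neg {s : Step} (h : s.val < 0) : s = Step.D := by
  cases s <;> simp_all [Step.val]

lemma hgt_eq_count_sub_count (w : List Step) : hgt w = w.count Step.U - w.count Step.D := by
  induction w with
  | nil => rfl
  | cons s w ih => cases s <;> simp [Step.val, ih] <;> ring

lemma length_eq_count_add_count_add_count (w : List Step) :
    w.length = w.count Step.U + w.count Step.H + w.count Step.D := by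
  induction w with
  | nil => rfl
  | cons s w ih => cases s <;> simp [ih] <;> ring

lemma forall_prefix_cons_le_hgt_iff {c : ℤ} {s : Step} {w : List Step} :
    (∀ p, p <+: s :: w → c ≤ hgt p) ↔ c ≤ 0 ∧ ∀ p, p <+: w → c - s.val ≤ hgt p := by
  simp only [List.prefix_cons_iff, forall_eq_or_imp, hgt_nil, forall_exists_index, and_imp]
  rw [forall_comm]
  simp only [forall_eq, hgt_cons, sub_le_iff_le_add']

def expandStep : Step → List Step
  | .U => [Step.H, Step.U]
  | s => [s]

def expand (M : List Step) : List Step := M.flatMap expandStep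

@[simp] lemma expand_nil : expand [] = [] := rfl

@[simp] lemma expand_cons (s : Step) (M : List Step) :
    expand (s :: M) = expandStep s ++ expand M := rfl

@[simp] lemma expand_append (M N : List Step) : expand (M ++ N) = expand M ++ expand N := by
  simp [expand]

@[simp] lemma hgt_expand (M : List Step) : hgt (expand M) = hgt M := by
  induction M with
  | nil => rfl
  | cons s M ih => cases s <;> simp [expandStep, ih, Step.val]

lemma count_U_expand (M : List Step) : (expand M).count Step.U = M.count Step.U := by
  induction M with
  | nil => rfl
  | cons s M ih => cases s <;> simp [expandStep, ih]

lemma count_H_expand (M : List Step) :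
    (expand M).count Step.H = M.count Step.H + M.count Step.U := by
  induction M with
  | nil => rfl
  | cons s M ih => cases s <;> simp [expandStep, ih] <;> ring

lemma forall_prefix_expand_le_hgt_iff {c : ℤ} {M : List Step} :
    (∀ q, q <+: expand M → c ≤ hgt q) ↔ ∀ p, p <+: M → c ≤ hgt p := by
  induction M generalizing c with
  | nil => simp
  | cons s M ih =>
    cases s <;> simp only [expand_cons, expandStep, List.cons_append, List.nil_append,
      forall_prefix_cons_le_hgt_iff, ih]
    simp [Step.val]

lemma isMotzkin_expand_iff {M : List Step} : IsMotzkin (expand M) ↔ IsMotzkin M := by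
  simp only [IsMotzkin, IsMotzkinPrefix, forall_prefix_expand_le_hgt_iff, hgt_expand]

def contract : List Step → List Step
  | .H :: .U :: w => .U :: contract w
  | s :: w => s :: contract w
  | [] => []

lemma contract_expand (M : List Step) : contract (expand M) = M := by
  induction M with
  | nil => rfl
  | cons s M ih =>
    cases s
    · simp [expandStep, contract, ih]
    · cases M with
      | nil => rfl
      | cons t M => cases t <;> simpa [expandStep, contract] using ih
    · simpa [expandStep, contract] using ih

def NoUUCorner (x y : Step) : Prop :=
  ¬ (x = Step.U ∧ y = Step.U) ∧ ¬ (x = Step.U ∧ y = Step.D) ∧ ¬ (x = Step.D ∧ y = Step.U)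

lemma isChain_noUUCorner_iff {w : List Step} :
    w.IsChain NoUUCorner ↔ ¬ [Step.U, Step.U] <:+: w ∧ Cornerless w := by
  unfold NoUUCorner
  rw [List.isChain_and_iff, List.isChain_and_iff]
  simp only [Cornerless, List.not_pair_infix_iff_isChain]

lemma isChain_expand_iff {M : List Step} :
    (expand M).IsChain NoUUCorner ↔ M.IsChain fun x y => ¬ (x = Step.U ∧ y = Step.D) := by
  induction M with
  | nil => simp
  | cons s M ih =>
    cases M with
    | nil => cases s <;> simp [expandStep, NoUUCorner]
    | cons t M =>
      rw [expand_cons, List.isChain_append, ih, List.isChain_cons_cons]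
      cases s <;> cases t <;> simp [expandStep, NoUUCorner]

lemma expand_contract {w : List Step} (hw : w.IsChain NoUUCorner) (hU : w.head? ≠ some Step.U) :
    expand (contract w) = w := by
  fun_induction contract w with
  | case1 w ih =>
    obtain ⟨hhead, hw⟩ := List.isChain_cons.1 (List.isChain_cons.1 hw).2
    simp [expandStep, ih hw fun h => (hhead _ h).1 ⟨rfl, rfl⟩]
  | case2 s w hHU ih =>
    obtain ⟨hhead, hw⟩ := List.isChain_cons.1 hw
    have hwU : w.head? ≠ some Step.U := by
      intro hw0
      cases s
      · simp at hU
      · obtain ⟨w', rfl⟩ : ∃ w', w = Step.U :: w' := by cases w <;> simp_all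
        exact hHU w' rfl rfl
      · exact (hhead _ hw0).2.2 ⟨rfl, rfl⟩
    cases s <;> simp_all [expandStep]
  | case3 => rfl

def IsPeaklessMotzkin (M : List Step) : Prop := IsMotzkin M ∧ ¬ [Step.U, Step.D] <:+: M

lemma IsMotzkin.head?_ne_D {M : List Step} (hM : IsMotzkin M) : M.head? ≠ some Step.D := by
  intro h
  obtain ⟨M', rfl⟩ : ∃ M', M = Step.D :: M' := by cases M <;> simp_all
  have := hM.1 [Step.D] (by simp)
  simp [Step.val] at this

lemma IsMotzkin.getLast?_ne_U {M : List Step} (hM : IsMotzkin M) : M.getLast? ≠ some Step.U := by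
  intro h
  obtain ⟨M', rfl⟩ : ∃ M', M = M' ++ [Step.U] :=
    ⟨M.dropLast, (List.dropLast_append_getLast? _ h).symm⟩
  have h₁ := hM.1 M' (by simp)
  have h₂ := hM.2
  simp only [hgt_append, hgt_cons, Step.val, hgt_nil, add_zero] at h₂
  omega

lemma forall_interior_prefix_pos_iff {v : List Step} :
    (∀ p, p <+: Step.U :: v ++ [Step.D] → p ≠ [] → p ≠ Step.U :: v ++ [Step.D] → 0 < hgt p) ↔
      IsMotzkinPrefix v := by
  simp only [List.prefix_cons_iff, List.prefix_concat_iff]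
  constructor
  · intro h p hp
    have hne : Step.U :: p ≠ Step.U :: v ++ [Step.D] := fun e => by
      have h₁ := congrArg List.length e
      have h₂ := hp.length_le
      simp only [List.length_cons, List.cons_append, List.length_append, List.length_nil] at h₁
      omega
    have := h (Step.U :: p) (Or.inr (Or.inr ⟨p, rfl, hp⟩)) (by simp) hne
    simp only [hgt_cons, Step.val] at this
    omega
  · rintro h p (rfl | rfl | ⟨p, rfl, hp⟩) hne hne'
    · exact absurd rfl hne'
    · exact absurd rfl hne
    · have := h p hp
      simp only [hgt_cons, Step.val]
      omega

lemma isBargraph_cons_append_iff {v : List Step} :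
    IsBargraph (Step.U :: v ++ [Step.D]) ↔ IsMotzkin v ∧ Cornerless (Step.U :: v ++ [Step.D]) := by
  have hhgt : hgt (Step.U :: v ++ [Step.D]) = hgt v := by simp [Step.val]
  rw [IsBargraph, forall_interior_prefix_pos_iff, hhgt, IsMotzkin]
  exact ⟨fun ⟨_, h0, hp, hc⟩ => ⟨⟨hp, h0⟩, hc⟩, fun ⟨⟨hp, h0⟩, hc⟩ => ⟨by simp, h0, hp, hc⟩⟩

lemma IsBargraph.eq_cons_append {w : List Step} (hw : IsBargraph w) :
    w = Step.U :: w.tail.dropLast ++ [Step.D] := by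
  obtain ⟨hlen, h0, hpos, -⟩ := hw
  obtain ⟨a, t, rfl⟩ := List.exists_cons_of_length_pos (show 0 < w.length by omega)
  obtain ⟨v, b, rfl⟩ := (List.eq_nil_or_concat' t).resolve_left (by rintro rfl; simp at hlen)
  have ha := hpos [a] (by simp) (by simp) (by simp)
  have hv := hpos (a :: v) (by simp) (by simp) (by simp)
  simp only [hgt_cons, hgt_append, hgt_nil] at h0 ha hv
  obtain rfl := Step.eq_U_of_val_pos (s := a) (by omega)
  obtain rfl := Step.eq_D_of_val_neg (s := b) (by omega)
  simp

def toBargraph (M : List Step) : List Step := Step.U :: expand M ++ [Step.D]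

lemma isChain_toBargraph_iff {M : List Step} :
    (toBargraph M).IsChain NoUUCorner ↔
      M ≠ [] ∧ M.head? ≠ some Step.D ∧ ¬ [Step.U, Step.D] <:+: M ∧ M.getLast? ≠ some Step.U := by
  have hT : toBargraph M = Step.U :: expand (M ++ [Step.D]) := by simp [toBargraph, expandStep]
  have hlast : (∀ x ∈ M.getLast?, ∀ y ∈ [Step.D].head?, ¬ (x = Step.U ∧ y = Step.D)) ↔
      M.getLast? ≠ some Step.U := by
    cases M.getLast? <;> simp
  rw [hT, List.isChain_cons, isChain_expand_iff, List.isChain_append, hlast,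
    ← List.not_pair_infix_iff_isChain]
  cases M with
  | nil => simp [expandStep, NoUUCorner]
  | cons s M => cases s <;> simp [expandStep, NoUUCorner]

lemma isBargraph_toBargraph_iff_isMotzkin {M : List Step} :
    IsBargraph (toBargraph M) ↔ IsMotzkin M ∧ Cornerless (toBargraph M) := by
  rw [toBargraph, isBargraph_cons_append_iff, isMotzkin_expand_iff]

theorem isBargraph_toBargraph_iff {M : List Step} :
    IsBargraph (toBargraph M) ∧ ¬ [Step.U, Step.U] <:+: toBargraph M ↔
      IsPeaklessMotzkin M ∧ M ≠ [] := by
  rw [isBargraph_toBargraph_iff_isMotzkin, and_assoc, and_comm (a := Cornerless _),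
    ← isChain_noUUCorner_iff, isChain_toBargraph_iff]
  constructor
  · rintro ⟨hM, hne, -, hUD, -⟩
    exact ⟨⟨hM, hUD⟩, hne⟩
  · rintro ⟨⟨hM, hUD⟩, hne⟩
    exact ⟨hM, hne, hM.head?_ne_D, hUD, hM.getLast?_ne_U⟩

lemma contract_toBargraph (M : List Step) : contract (toBargraph M).tail.dropLast = M := by
  simp [toBargraph, contract_expand]

theorem toBargraph_contract {w : List Step} (hw : IsBargraph w)
    (hUU : ¬ [Step.U, Step.U] <:+: w) : toBargraph (contract w.tail.dropLast) = w := by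
  have hchain : w.IsChain NoUUCorner := isChain_noUUCorner_iff.2 ⟨hUU, hw.2.2.2⟩
  rw [hw.eq_cons_append, List.cons_append, List.isChain_cons, List.isChain_append] at hchain
  obtain ⟨hhead, hv, -⟩ := hchain
  have hvU : w.tail.dropLast.head? ≠ some Step.U := fun h =>
    (hhead Step.U (by simp [List.head?_append, h])).1 ⟨rfl, rfl⟩
  rw [toBargraph, expand_contract hv hvU, ← hw.eq_cons_append]

lemma count_U_toBargraph (M : List Step) : (toBargraph M).count Step.U = M.count Step.U + 1 := by
  simp [toBargraph, count_U_expand]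

lemma count_H_toBargraph (M : List Step) :
    (toBargraph M).count Step.H = M.count Step.H + M.count Step.U := by
  simp [toBargraph, count_H_expand]

lemma semi_toBargraph {M : List Step} (hM : hgt M = 0) : semi (toBargraph M) = M.length + 1 := by
  have := hgt_eq_count_sub_count M
  have := length_eq_count_add_count_add_count M
  rw [semi, count_U_toBargraph, count_H_toBargraph]
  omega

lemma count_H_toBargraph_eq_length_sub {M : List Step} (hM : hgt M = 0) :
    (toBargraph M).count Step.H = M.length - M.count Step.U := by
  have := hgt_eq_count_sub_count M
  have := length_eq_count_add_count_add_count M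
  rw [count_H_toBargraph]
  omega

def peaklessMotzkinEquivBargraph (n : ℕ) (hn : 2 ≤ n) :
    {M : List Step // IsPeaklessMotzkin M ∧ M.length = n - 1} ≃
      {w : List Step // IsBargraph w ∧ ¬ [Step.U, Step.U] <:+: w ∧ semi w = n} where
  toFun M :=
    have h := isBargraph_toBargraph_iff.2 ⟨M.2.1, List.ne_nil_of_length_pos (by omega)⟩
    ⟨toBargraph M, h.1, h.2, by rw [semi_toBargraph M.2.1.1.2, M.2.2]; omega⟩
  invFun w :=
    have h := toBargraph_contract w.2.1 w.2.2.1
    have hM := (isBargraph_toBargraph_iff.1 (by rw [h]; exact ⟨w.2.1, w.2.2.1⟩)).1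
    ⟨contract w.1.tail.dropLast, hM, by have := semi_toBargraph hM.1.2; rw [h] at this; omega⟩
  left_inv M := Subtype.ext (contract_toBargraph M)
  right_inv w := Subtype.ext (toBargraph_contract w.2.1 w.2.2.1)

def hgtAt (M : List Step) (k : ℕ) : ℤ := hgt (M.take k)

lemma hgtAt_succ {M : List Step} {k : ℕ} {s : Step} (h : M[k]? = some s) :
    hgtAt M (k + 1) = hgtAt M k + s.val := by
  simp [hgtAt, List.take_add_one, h]

lemma hgtAt_length (M : List Step) : hgtAt M M.length = hgt M := by
  rw [hgtAt, List.take_length]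

lemma hgtAt_succ_le_add_one (M : List Step) (k : ℕ) : hgtAt M (k + 1) ≤ hgtAt M k + 1 := by
  cases h : M[k]? with
  | none => simp [hgtAt, List.take_add_one, h]
  | some s => rw [hgtAt_succ h]; cases s <;> simp only [Step.val] <;> omega

lemma hgtAt_le_hgtAt_succ_add_one (M : List Step) (k : ℕ) : hgtAt M k ≤ hgtAt M (k + 1) + 1 := by
  cases h : M[k]? with
  | none => simp [hgtAt, List.take_add_one, h]
  | some s => rw [hgtAt_succ h]; cases s <;> simp only [Step.val] <;> omega

lemma IsMotzkinPrefix.hgtAt_nonneg {M : List Step} (hM : IsMotzkinPrefix M) (k : ℕ) :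
    0 ≤ hgtAt M k :=
  hM _ (List.take_prefix k M)

structure IsMatched (M : List Step) (i j : ℕ) : Prop where
  lt : i < j
  lt_length : j < M.length
  hgtAt_succ_right : hgtAt M (j + 1) = hgtAt M i
  hgtAt_lt : ∀ k, i < k → k ≤ j → hgtAt M i < hgtAt M k

namespace IsMatched

variable {M : List Step} {i j : ℕ}

lemma getElem?_left (h : IsMatched M i j) : M[i]? = some Step.U := by
  have hi : i < M.length := h.lt.trans h.lt_length
  have := h.hgtAt_lt (i + 1) (by omega) h.lt
  rw [hgtAt_succ (List.getElem?_eq_getElem hi)] at this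
  rw [List.getElem?_eq_getElem hi, Step.eq_U_of_val_pos (s := M[i]) (by omega)]

lemma getElem?_right (h : IsMatched M i j) : M[j]? = some Step.D := by
  have hj := h.lt_length
  have h₁ := h.hgtAt_lt j h.lt le_rfl
  have h₂ := h.hgtAt_succ_right
  rw [hgtAt_succ (List.getElem?_eq_getElem hj)] at h₂
  rw [List.getElem?_eq_getElem hj, Step.eq_D_of_val_neg (s := M[j]) (by omega)]

lemma right_unique {j' : ℕ} (h : IsMatched M i j) (h' : IsMatched M i j') : j = j' := by
  by_contra hne
  wlog hlt : j < j' generalizing j j'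
  · exact this h' h (Ne.symm hne) (by omega)
  have := h'.hgtAt_lt (j + 1) (by have := h.lt; omega) hlt
  rw [h.hgtAt_succ_right] at this
  exact lt_irrefl _ this

lemma left_unique {i' : ℕ} (h : IsMatched M i j) (h' : IsMatched M i' j) : i = i' := by
  by_contra hne
  wlog hlt : i < i' generalizing i i'
  · exact this h' h (Ne.symm hne) (by omega)
  have := h.hgtAt_lt i' hlt h'.lt.le
  rw [← h'.hgtAt_succ_right, h.hgtAt_succ_right] at this
  exact lt_irrefl _ this

lemma not_cross {i' j' : ℕ} (h : IsMatched M i j) (h' : IsMatched M i' j') (hi : i < i')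
    (hi' : i' < j) (hj : j < j') : False := by
  have h₁ := h.hgtAt_lt i' hi hi'.le
  have h₂ := h'.hgtAt_lt (j + 1) (by omega) hj
  rw [h.hgtAt_succ_right] at h₂
  exact lt_irrefl _ (h₁.trans h₂)

lemma add_two_le (h : IsMatched M i j) (hUD : ¬ [Step.U, Step.D] <:+: M) : i + 2 ≤ j := by
  by_contra hij
  obtain rfl : j = i + 1 := by have := h.lt; omega
  exact hUD (List.pair_infix_iff_getElem?.2 ⟨i, h.getElem?_left, h.getElem?_right⟩)

end IsMatched

lemma IsMotzkin.exists_isMatched_right {M : List Step} (hM : IsMotzkin M) {i : ℕ}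
    (hi : M[i]? = some Step.U) : ∃ j, IsMatched M i j := by
  classical
  have hlen : i < M.length := (List.getElem?_eq_some_iff.1 hi).1
  have hend : i < M.length ∧ hgtAt M M.length ≤ hgtAt M i :=
    ⟨hlen, by rw [hgtAt_length, hM.2]; exact hM.1.hgtAt_nonneg i⟩
  have hex : ∃ k, i < k ∧ hgtAt M k ≤ hgtAt M i := ⟨_, hend⟩
  obtain ⟨hik, hki⟩ := Nat.find_spec hex
  have hmin : ∀ l, i < l → l < Nat.find hex → hgtAt M i < hgtAt M l := fun l hil hl =>
    not_le.1 fun h => Nat.find_min hex hl ⟨hil, h⟩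
  have hstep : hgtAt M (i + 1) = hgtAt M i + 1 := by rw [hgtAt_succ hi]; rfl
  have hfind : Nat.find hex ≠ i + 1 := fun h => by rw [h] at hki; omega
  refine ⟨Nat.find hex - 1, by omega, ?_, ?_, fun l hil hl => hmin l hil (by omega)⟩
  · have := Nat.find_min' hex hend
    omega
  · have h₁ := hmin (Nat.find hex - 1) (by omega) (by omega)
    have h₂ := hgtAt_le_hgtAt_succ_add_one M (Nat.find hex - 1)
    rw [Nat.sub_add_cancel (by omega)] at h₂ ⊢
    omega

lemma IsMotzkinPrefix.exists_isMatched_left {M : List Step} (hM : IsMotzkinPrefix M) {j : ℕ}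
    (hj : M[j]? = some Step.D) : ∃ i, IsMatched M i j := by
  have hlen : j < M.length := (List.getElem?_eq_some_iff.1 hj).1
  have hstep : hgtAt M (j + 1) = hgtAt M j - 1 := by
    rw [hgtAt_succ hj, Step.val, sub_eq_add_neg]
  set i := Nat.findGreatest (fun l => hgtAt M l ≤ hgtAt M (j + 1)) j
  have hi : hgtAt M i ≤ hgtAt M (j + 1) :=
    Nat.findGreatest_spec (P := fun l => hgtAt M l ≤ hgtAt M (j + 1)) (Nat.zero_le j)
      (by simpa [hgtAt] using hM.hgtAt_nonneg (j + 1))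
  have habove : ∀ l, i < l → l ≤ j → hgtAt M (j + 1) < hgtAt M l := fun l hil hlj =>
    not_le.1 (Nat.findGreatest_is_greatest hil hlj)
  have hij : i < j := lt_of_le_of_ne (Nat.findGreatest_le j) fun h => by rw [h] at hi; omega
  have h₁ := habove (i + 1) (by omega) (by omega)
  have h₂ := hgtAt_succ_le_add_one M i
  exact ⟨i, hij, hlen, by omega, fun l hil hlj => by have := habove l hil hlj; omega⟩

def arcGraph (m : ℕ) (M : List Step) : SimpleGraph (Fin m) :=
  SimpleGraph.fromRel fun a b => (a : ℕ) + 1 = b ∨ IsMatched M a b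

section ArcGraph

variable {m : ℕ} {M : List Step}

lemma arcGraph_adj_of_succ_eq {a b : Fin m} (hab : (a : ℕ) + 1 = b) : (arcGraph m M).Adj a b := by
  simp only [arcGraph, SimpleGraph.fromRel_adj]
  exact ⟨fun e => by rw [e] at hab; omega, Or.inl (Or.inl hab)⟩

lemma arcGraph_adj_iff_of_lt {a b : Fin m} (hab : (a : ℕ) + 1 < b) :
    (arcGraph m M).Adj a b ↔ IsMatched M a b := by
  have : ¬ IsMatched M b a := fun h => by have := h.lt; omega
  simp only [arcGraph, SimpleGraph.fromRel_adj]
  constructor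
  · rintro ⟨-, (h | h) | (h | h)⟩ <;> first | omega | trivial
  · exact fun h => ⟨fun e => by rw [e] at hab; omega, Or.inl (Or.inr h)⟩

lemma isMatched_of_arcGraph_adj {a b : Fin m} (h : (arcGraph m M).Adj a b)
    (h₁ : (a : ℕ) + 1 ≠ b) (h₂ : (b : ℕ) + 1 ≠ a) : IsMatched M a b ∨ IsMatched M b a := by
  simp only [arcGraph, SimpleGraph.fromRel_adj] at h
  tauto

theorem isSecondaryStructure_arcGraph (m : ℕ) (M : List Step) :
    IsSecondaryStructure (arcGraph m M) := by
  refine ⟨fun i j h => arcGraph_adj_of_succ_eq h, fun i j k hj hk h₁ h₂ h₃ h₄ => ?_, ?_⟩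
  · apply Fin.ext
    rcases isMatched_of_arcGraph_adj hj h₁ h₂ with hj | hj <;>
      rcases isMatched_of_arcGraph_adj hk h₃ h₄ with hk | hk
    · exact hj.right_unique hk
    · simpa [hj.getElem?_left] using hk.getElem?_right
    · simpa [hj.getElem?_right] using hk.getElem?_left
    · exact hj.left_unique hk
  · rintro ⟨i, j, k, l, hij, hjk, hkl, hik, hjl⟩
    rw [arcGraph_adj_iff_of_lt (by omega)] at hik hjl
    exact hik.not_cross hjl hij hjk hkl

end ArcGraph

section SecondaryStructure

variable {m : ℕ}

def LongArc (G : SimpleGraph (Fin m)) (a b : Fin m) : Prop := G.Adj a b ∧ (a : ℕ) + 1 < b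

namespace IsSecondaryStructure

variable {G : SimpleGraph (Fin m)} {a b c d : Fin m}

lemma eq_of_adj_of_adj (hG : IsSecondaryStructure G) (hb : G.Adj a b) (hc : G.Adj a c)
    (hab : (a : ℕ) + 1 < b ∨ (b : ℕ) + 1 < a) (hac : (a : ℕ) + 1 < c ∨ (c : ℕ) + 1 < a) :
    b = c :=
  hG.2.1 a b c hb hc (by omega) (by omega) (by omega) (by omega)

lemma longArc_right_unique (hG : IsSecondaryStructure G) (h : LongArc G a b)
    (h' : LongArc G a c) : b = c :=
  hG.eq_of_adj_of_adj h.1 h'.1 (.inl h.2) (.inl h'.2)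

lemma longArc_left_unique (hG : IsSecondaryStructure G) (h : LongArc G a c)
    (h' : LongArc G b c) : a = b :=
  hG.eq_of_adj_of_adj h.1.symm h'.1.symm (.inr h.2) (.inr h'.2)

lemma not_longArc_of_longArc (hG : IsSecondaryStructure G) (h : LongArc G a b)
    (h' : LongArc G c a) : False := by
  have := congrArg Fin.val (hG.eq_of_adj_of_adj h.1 h'.1.symm (.inl h.2) (.inr h'.2))
  have := h.2
  have := h'.2
  omega

lemma not_longArc_cross (hG : IsSecondaryStructure G) (h : LongArc G a c) (h' : LongArc G b d)
    (hab : (a : ℕ) < b) (hbc : (b : ℕ) < c) (hcd : (c : ℕ) < d) : False :=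
  hG.2.2 ⟨a, b, c, d, hab, hbc, hcd, h.1, h'.1⟩

lemma lt_of_longArc_of_lt_of_le (hG : IsSecondaryStructure G) (h : LongArc G a b)
    (h' : LongArc G c d) (hca : (c : ℕ) < a) (had : (a : ℕ) ≤ d) : (b : ℕ) < d := by
  have hda : a ≠ d := by rintro rfl; exact hG.not_longArc_of_longArc h h'
  have hdb : b ≠ d := by rintro rfl; exact absurd (hG.longArc_left_unique h h') (by omega)
  by_contra hbd
  exact hG.not_longArc_cross h' h hca (by omega) (by omega)

lemma lt_of_longArc_of_le_of_lt (hG : IsSecondaryStructure G) (h : LongArc G a b)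
    (h' : LongArc G c d) (hcb : (c : ℕ) ≤ b) (hbd : (b : ℕ) < d) : (c : ℕ) < a := by
  have hcb' : c ≠ b := by rintro rfl; exact hG.not_longArc_of_longArc h' h
  have hca : c ≠ a := by rintro rfl; exact absurd (hG.longArc_right_unique h h') (by omega)
  by_contra hac
  exact hG.not_longArc_cross h h' (by omega) (by omega) hbd

end IsSecondaryStructure

open Classical in
noncomputable def motzkinStep (G : SimpleGraph (Fin m)) (v : Fin m) : Step :=
  if ∃ u, LongArc G v u then Step.U else if ∃ u, LongArc G u v then Step.D else Step.H

noncomputable def motzkinWord (G : SimpleGraph (Fin m)) : List Step := List.ofFn (motzkinStep G)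

open Classical in
noncomputable def arcsOver (G : SimpleGraph (Fin m)) (k : ℕ) : Finset (Fin m × Fin m) :=
  Finset.univ.filter fun e => LongArc G e.1 e.2 ∧ (e.1 : ℕ) < k ∧ k ≤ e.2

variable {G : SimpleGraph (Fin m)}

@[simp] lemma length_motzkinWord : (motzkinWord G).length = m := List.length_ofFn

lemma getElem?_motzkinWord (v : Fin m) : (motzkinWord G)[(v : ℕ)]? = some (motzkinStep G v) := by
  simp [motzkinWord]

lemma motzkinStep_eq_U_iff {v : Fin m} : motzkinStep G v = Step.U ↔ ∃ u, LongArc G v u := by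
  unfold motzkinStep
  split_ifs <;> simp_all

lemma exists_longArc_of_motzkinStep_eq_D {v : Fin m} (h : motzkinStep G v = Step.D) :
    ∃ u, LongArc G u v := by
  unfold motzkinStep at h
  split_ifs at h with h₁ h₂
  exact h₂

section

open Classical

lemma val_motzkinStep (hG : IsSecondaryStructure G) (v : Fin m) :
    (motzkinStep G v).val =
      (if ∃ u, LongArc G v u then 1 else 0) - (if ∃ u, LongArc G u v then 1 else 0) := by
  have hnot : ¬ ((∃ u, LongArc G v u) ∧ ∃ u, LongArc G u v) := fun ⟨⟨_, hu⟩, _, hw⟩ =>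
    hG.not_longArc_of_longArc hu hw
  unfold motzkinStep
  split_ifs <;> simp_all [Step.val]

lemma card_filter_longArc_fst (hG : IsSecondaryStructure G) (v : Fin m) :
    (Finset.univ.filter fun e : Fin m × Fin m => LongArc G e.1 e.2 ∧ e.1 = v).card =
      if ∃ u, LongArc G v u then 1 else 0 := by
  rw [Finset.card_filter_eq_ite]
  · simp [Prod.exists]
  · rintro ⟨a, b⟩ - ⟨a', b'⟩ - ⟨h, rfl⟩ ⟨h', rfl⟩
    exact Prod.ext rfl (hG.longArc_right_unique h h')

lemma card_filter_longArc_snd (hG : IsSecondaryStructure G) (v : Fin m) :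
    (Finset.univ.filter fun e : Fin m × Fin m => LongArc G e.1 e.2 ∧ e.2 = v).card =
      if ∃ u, LongArc G u v then 1 else 0 := by
  rw [Finset.card_filter_eq_ite]
  · simp [Prod.exists]
  · rintro ⟨a, b⟩ - ⟨a', b'⟩ - ⟨h, rfl⟩ ⟨h', rfl⟩
    exact Prod.ext (hG.longArc_left_unique h h') rfl

lemma hgtAt_motzkinWord (hG : IsSecondaryStructure G) {k : ℕ} (hk : k ≤ m) :
    hgtAt (motzkinWord G) k = (arcsOver G k).card := by
  induction k with
  | zero => simp [hgtAt, arcsOver]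
  | succ k ih =>
    set v : Fin m := ⟨k, by omega⟩
    have hstep : (motzkinWord G)[k]? = some (motzkinStep G v) := getElem?_motzkinWord v
    set starts := Finset.univ.filter fun e : Fin m × Fin m => LongArc G e.1 e.2 ∧ e.1 = v
    set ends := Finset.univ.filter fun e : Fin m × Fin m => LongArc G e.1 e.2 ∧ e.2 = v
    have hunion : arcsOver G (k + 1) ∪ ends = arcsOver G k ∪ starts := by
      ext e
      simp only [arcsOver, starts, ends, v, Finset.mem_union, Finset.mem_filter, Finset.mem_univ,
        true_and, Fin.ext_iff]
      by_cases h : LongArc G e.1 e.2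
      · have := h.2
        simp only [h, true_and]
        omega
      · simp [h]
    have hcard := congrArg Finset.card hunion
    rw [Finset.card_union_of_disjoint, Finset.card_union_of_disjoint] at hcard
    · rw [card_filter_longArc_fst hG, card_filter_longArc_snd hG] at hcard
      rw [hgtAt_succ hstep, ih (by omega), val_motzkinStep hG]
      split_ifs at hcard ⊢ <;> push_cast <;> omega
    · exact Finset.disjoint_filter.2 fun e _ h h' => by
        simp only [Fin.ext_iff, v] at h'; omega
    · exact Finset.disjoint_filter.2 fun e _ h h' => by
        simp only [Fin.ext_iff, v] at h'; omega

end

end SecondaryStructure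

section MotzkinWord

variable {m : ℕ} {G : SimpleGraph (Fin m)} {M : List Step}

lemma motzkinWord_isMotzkin (hG : IsSecondaryStructure G) : IsMotzkin (motzkinWord G) := by
  classical
  refine ⟨fun p hp => ?_, ?_⟩
  · have hlen : p.length ≤ m := by simpa using hp.length_le
    rw [List.prefix_iff_eq_take.1 hp, ← hgtAt, hgtAt_motzkinWord hG hlen]
    positivity
  · rw [← hgtAt_length, length_motzkinWord, hgtAt_motzkinWord hG le_rfl, Nat.cast_eq_zero,
      Finset.card_eq_zero, arcsOver, Finset.filter_eq_empty_iff]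
    exact fun e _ h => by have := e.2.2; omega

lemma not_UD_infix_motzkinWord (hG : IsSecondaryStructure G) :
    ¬ [Step.U, Step.D] <:+: motzkinWord G := by
  rw [List.pair_infix_iff_getElem?]
  rintro ⟨k, hU, hD⟩
  have hk : k + 1 < m := by simpa using (List.getElem?_eq_some_iff.1 hD).1
  rw [getElem?_motzkinWord ⟨k, by omega⟩, Option.some_inj, motzkinStep_eq_U_iff] at hU
  rw [getElem?_motzkinWord ⟨k + 1, hk⟩, Option.some_inj] at hD
  obtain ⟨b, hb⟩ := hU
  obtain ⟨a, ha⟩ := exists_longArc_of_motzkinStep_eq_D hD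
  have ha' : (a : ℕ) + 1 < k + 1 := ha.2
  have hb' : k + 1 < (b : ℕ) := hb.2
  exact hG.not_longArc_cross ha hb (show (a : ℕ) < k by omega) (show k < k + 1 by omega) hb'

lemma isMatched_motzkinWord_of_longArc (hG : IsSecondaryStructure G) {a b : Fin m}
    (h : LongArc G a b) : IsMatched (motzkinWord G) a b := by
  have hab := h.2
  refine ⟨by omega, by simp, ?_, fun k hak hkb => ?_⟩
  · rw [hgtAt_motzkinWord hG (by omega), hgtAt_motzkinWord hG (by omega)]
    congr 2
    ext e
    simp only [arcsOver, Finset.mem_filter, Finset.mem_univ, true_and]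
    constructor
    · rintro ⟨he, h₁, h₂⟩
      exact ⟨he, hG.lt_of_longArc_of_le_of_lt h he (by omega) (by omega), by omega⟩
    · rintro ⟨he, h₁, h₂⟩
      have := hG.lt_of_longArc_of_lt_of_le h he h₁ h₂
      exact ⟨he, by omega, by omega⟩
  · rw [hgtAt_motzkinWord hG (by omega), hgtAt_motzkinWord hG (by omega), Nat.cast_lt]
    apply Finset.card_lt_card
    rw [Finset.ssubset_iff_of_subset]
    · refine ⟨(a, b), ?_, by simp [arcsOver]⟩
      simp only [arcsOver, Finset.mem_filter, Finset.mem_univ, h, true_and]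
      omega
    · intro e
      simp only [arcsOver, Finset.mem_filter, Finset.mem_univ, true_and]
      rintro ⟨he, h₁, h₂⟩
      have := hG.lt_of_longArc_of_lt_of_le h he h₁ h₂
      exact ⟨he, by omega, by omega⟩

lemma arcGraph_motzkinWord_adj_iff_of_lt (hG : IsSecondaryStructure G) {a b : Fin m}
    (hab : (a : ℕ) + 1 < b) : (arcGraph m (motzkinWord G)).Adj a b ↔ G.Adj a b := by
  rw [arcGraph_adj_iff_of_lt hab]
  refine ⟨fun h => ?_, fun h => isMatched_motzkinWord_of_longArc hG ⟨h, hab⟩⟩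
  have hU := h.getElem?_left
  rw [getElem?_motzkinWord a, Option.some_inj, motzkinStep_eq_U_iff] at hU
  obtain ⟨u, hu⟩ := hU
  obtain rfl : u = b := Fin.ext ((isMatched_motzkinWord_of_longArc hG hu).right_unique h)
  exact hu.1

theorem arcGraph_motzkinWord (hG : IsSecondaryStructure G) : arcGraph m (motzkinWord G) = G := by
  ext a b
  obtain h | h | h | h | h : (a : ℕ) + 1 < b ∨ (b : ℕ) + 1 < a ∨ (a : ℕ) + 1 = b ∨
      (b : ℕ) + 1 = a ∨ a = b := by omega
  · exact arcGraph_motzkinWord_adj_iff_of_lt hG h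
  · rw [SimpleGraph.adj_comm, arcGraph_motzkinWord_adj_iff_of_lt hG h, G.adj_comm]
  · exact iff_of_true (arcGraph_adj_of_succ_eq h) (hG.1 a b h)
  · exact iff_of_true (arcGraph_adj_of_succ_eq h).symm (hG.1 b a h).symm
  · subst h
    simp

lemma exists_longArc_arcGraph_iff_eq_U (hM : IsPeaklessMotzkin M) (hlen : M.length = m)
    (v : Fin m) : (∃ u, LongArc (arcGraph m M) v u) ↔ M[(v : ℕ)]? = some Step.U := by
  constructor
  · rintro ⟨u, hu, hvu⟩
    exact ((arcGraph_adj_iff_of_lt hvu).1 hu).getElem?_left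
  · intro hU
    obtain ⟨j, hj⟩ := hM.1.exists_isMatched_right hU
    have hvj : (v : ℕ) + 1 < j := by have := hj.add_two_le hM.2; omega
    have := hj.lt_length
    exact ⟨⟨j, by omega⟩, (arcGraph_adj_iff_of_lt hvj).2 hj, hvj⟩

lemma exists_longArc_arcGraph_iff_eq_D (hM : IsPeaklessMotzkin M) (v : Fin m) :
    (∃ u, LongArc (arcGraph m M) u v) ↔ M[(v : ℕ)]? = some Step.D := by
  constructor
  · rintro ⟨u, hu, huv⟩
    exact ((arcGraph_adj_iff_of_lt huv).1 hu).getElem?_right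
  · intro hD
    obtain ⟨i, hi⟩ := hM.1.1.exists_isMatched_left hD
    have hiv : i + 1 < (v : ℕ) := by have := hi.add_two_le hM.2; omega
    exact ⟨⟨i, by omega⟩, (arcGraph_adj_iff_of_lt hiv).2 hi, hiv⟩

theorem motzkinWord_arcGraph (hM : IsPeaklessMotzkin M) (hlen : M.length = m) :
    motzkinWord (arcGraph m M) = M := by
  refine List.ext_getElem? fun k => ?_
  by_cases hk : k < m
  · obtain ⟨s, hs⟩ : ∃ s, M[k]? = some s := ⟨M[k], List.getElem?_eq_getElem (by omega)⟩
    have : (motzkinWord (arcGraph m M))[k]? = some (motzkinStep _ ⟨k, hk⟩) :=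
      getElem?_motzkinWord ⟨k, hk⟩
    simp only [this, hs, motzkinStep, exists_longArc_arcGraph_iff_eq_U hM hlen,
      exists_longArc_arcGraph_iff_eq_D hM]
    cases s <;> simp
  · simp [hlen, not_lt.1 hk]

open Classical in
lemma count_U_motzkinWord (G : SimpleGraph (Fin m)) :
    (motzkinWord G).count Step.U = (Finset.univ.filter fun v => ∃ u, LongArc G v u).card := by
  rw [motzkinWord, ← Multiset.coe_count, ← Fin.univ_val_map, Multiset.count_map, Finset.card_def,
    Finset.filter_val]
  exact congrArg _ (Multiset.filter_congr fun v _ => by rw [eq_comm, motzkinStep_eq_U_iff])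

lemma natCard_add_one_eq_sub_count_U (G : SimpleGraph (Fin m)) (hm : 1 ≤ m) :
    Nat.card {v : Fin m // (v : ℕ) + 2 ≤ m ∧ ∀ u, G.Adj v u → (u : ℕ) ≤ (v : ℕ) + 1} + 1 =
      m - (motzkinWord G).count Step.U := by
  classical
  have hP : ∀ v : Fin m, ((v : ℕ) + 2 ≤ m ∧ ∀ u, G.Adj v u → (u : ℕ) ≤ (v : ℕ) + 1) ↔
      (v : ℕ) + 2 ≤ m ∧ ¬ ∃ u, LongArc G v u := by
    simp [LongArc]
  simp only [Nat.card_eq_fintype_card, Fintype.card_subtype, hP, count_U_motzkinWord]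
  set last : Fin m := ⟨m - 1, by omega⟩
  have hcompl : (Finset.univ.filter fun v : Fin m => ¬ ((v : ℕ) + 2 ≤ m ∧ ¬ ∃ u, LongArc G v u)) =
      insert last (Finset.univ.filter fun v => ∃ u, LongArc G v u) := by
    ext v
    simp only [Finset.mem_filter, Finset.mem_univ, true_and, Finset.mem_insert, Fin.ext_iff, last]
    constructor
    · intro h
      by_cases hv : (v : ℕ) + 2 ≤ m
      · exact Or.inr (by tauto)
      · exact Or.inl (by omega)
    · rintro (h | ⟨u, hu⟩)
      · omega
      · exact fun h => h.2 ⟨u, hu⟩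
  have hlast : last ∉ Finset.univ.filter fun v => ∃ u, LongArc G v u := by
    simp only [Finset.mem_filter, Finset.mem_univ, true_and, not_exists]
    intro u hu
    have : m - 1 + 1 < (u : ℕ) := hu.2
    omega
  have := Finset.card_filter_add_card_filter_not (s := Finset.univ)
    (fun v : Fin m => (v : ℕ) + 2 ≤ m ∧ ¬ ∃ u, LongArc G v u)
  rw [hcompl, Finset.card_insert_of_notMem hlast, Finset.card_univ, Fintype.card_fin] at this
  omega

lemma natCard_arcGraph_add_one (hM : IsPeaklessMotzkin M) (hlen : M.length = m) (hm : 1 ≤ m) :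
    Nat.card {v : Fin m // (v : ℕ) + 2 ≤ m ∧
        ∀ u, (arcGraph m M).Adj v u → (u : ℕ) ≤ (v : ℕ) + 1} + 1 =
      M.length - M.count Step.U := by
  rw [natCard_add_one_eq_sub_count_U _ hm, motzkinWord_arcGraph hM hlen, hlen]

end MotzkinWord

noncomputable def peaklessMotzkinEquivSecondaryStructure (m : ℕ) :
    {M : List Step // IsPeaklessMotzkin M ∧ M.length = m} ≃
      {G : SimpleGraph (Fin m) // IsSecondaryStructure G} where
  toFun M := ⟨arcGraph m M, isSecondaryStructure_arcGraph m M⟩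
  invFun G := ⟨motzkinWord G, ⟨motzkinWord_isMotzkin G.2, not_UD_infix_motzkinWord G.2⟩,
    length_motzkinWord⟩
  left_inv M := Subtype.ext (motzkinWord_arcGraph M.2.1 M.2.2)
  right_inv G := Subtype.ext (arcGraph_motzkinWord G.2)

/-- bargraphs of semiperimeter `n` with no two consecutive `U` steps and
exactly `j` `H` steps are equinumerous with secondary structures on `n - 1` vertices
having exactly `j - 1` vertices (other than the last) whose degree comes only from
consecutive edges pointing upward (no non-consecutive edge to a larger vertex); in
particular, bargraphs of semiperimeter `n` with no `UU` are equinumerous with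
secondary structures on `n - 1` vertices. -/
theorem noUU_secondary_structures :
    (∀ n j : ℕ, 2 ≤ n → 1 ≤ j →
      Nat.card {w : List Step // IsBargraph w ∧ ¬ [Step.U, Step.U] <:+: w ∧
          semi w = n ∧ w.count Step.H = j}
        = Nat.card {G : SimpleGraph (Fin (n - 1)) // IsSecondaryStructure G ∧
            Nat.card {v : Fin (n - 1) // (v : ℕ) + 2 ≤ n - 1 ∧
              ∀ u, G.Adj v u → (u : ℕ) ≤ (v : ℕ) + 1} = j - 1}) ∧
    (∀ n : ℕ, 2 ≤ n →
      Nat.card {w : List Step // IsBargraph w ∧ ¬ [Step.U, Step.U] <:+: w ∧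
          semi w = n}
        = Nat.card {G : SimpleGraph (Fin (n - 1)) // IsSecondaryStructure G}) := by
  refine ⟨fun n j hn hj => ?_, fun n hn => Nat.card_congr <|
    (peaklessMotzkinEquivBargraph n hn).symm.trans (peaklessMotzkinEquivSecondaryStructure _)⟩
  calc _ = Nat.card {w : List Step // (IsBargraph w ∧ ¬ [Step.U, Step.U] <:+: w ∧ semi w = n) ∧
          w.count Step.H = j} := by simp only [and_assoc]
    _ = Nat.card {M : List Step // (IsPeaklessMotzkin M ∧ M.length = n - 1) ∧
          M.length - M.count Step.U = j} :=
      (Nat.card_subtype_and_eq_of_equiv (peaklessMotzkinEquivBargraph n hn)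
        (fun M => count_H_toBargraph_eq_length_sub M.2.1.1.2) j).symm
    _ = Nat.card {G : SimpleGraph (Fin (n - 1)) // IsSecondaryStructure G ∧
          Nat.card {v : Fin (n - 1) // (v : ℕ) + 2 ≤ n - 1 ∧
            ∀ u, G.Adj v u → (u : ℕ) ≤ (v : ℕ) + 1} + 1 = j} :=
      Nat.card_subtype_and_eq_of_equiv (peaklessMotzkinEquivSecondaryStructure (n - 1))
        (fun M => natCard_arcGraph_add_one M.2.1 M.2.2 (by omega)) j
    _ = _ := Nat.card_congr <| Equiv.subtypeEquivRight fun G => and_congr_right fun _ => by omega
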